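/- arXiv:2302.01705 — 3 statements merged into one kernel-verified Lean document; each statement's English description precedes it below -/
import Mathlib

section
/- For every C* > 0 there exists a constant C > 0, depending only on C*, with the following property. Let κ = conv{x,y,z} ⊂ ℝ³ be a C*-regular triangle with unit normal n̄(κ), let N : ℝ³ → ℝ³ be an affine map with linear part L, let D = L∘P with P the orthogonal projection of ℝ³ onto span{y−x, z−x}, and let m₁ = (x+y)/2 and m₂ = (y+z)/2 be the midpoints of the edges [x,y] and [y,z]. Assume |N(m₁)| = |N(m₂)| = 1, N(m₁)·(y−x) = 0, N(m₂)·(z−y) = 0, and N(m₁)·n̄(κ) ≥ 0. Then |N(m₁) − n̄(κ)| ≤ C·diam(κ)·‖D‖, where ‖D‖ is the operator norm. (This is the paper's Lemma 'normal estimate' stating that any unit edge director of a regular triangular complex is close to the actual triangle normal.) -/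
/-!
Write `w = N(m₁)`, `s = ⟪w, n̄⟫` and `c = (y - x) × (z - x)`. Since `w ⊥ y - x`, Lagrange's identity
for the cross product gives `(1 - s²)‖c‖² = ⟪w, z - x⟫² ‖y - x‖²`, and for unit vectors with `s ≥ 0`
we have `‖w - n̄‖² = 2 - 2s ≤ 2(1 - s²)`. The tangential component `⟪w, z - x⟫` equals
`⟪w - N(m₂), z - y⟫`, and `N(m₂) - N(m₁) = D((z - x)/2)` because `z - x` is tangent, so it is at
most `‖D‖ diam²/2`. Regularity, `‖c‖ ≥ 2C* diam²`, then yields `‖w - n̄‖ ≤ C*⁻¹ diam ‖D‖`.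
-/

open scoped RealInnerProductSpace

noncomputable section

/-- Euclidean 3-space. -/
abbrev E3 := EuclideanSpace ℝ (Fin 3)

/-- The cross product on `ℝ³`. -/
def cross3 (u v : E3) : E3 :=
  (WithLp.equiv 2 (Fin 3 → ℝ)).symm
    ![u 1 * v 2 - u 2 * v 1, u 2 * v 0 - u 0 * v 2, u 0 * v 1 - u 1 * v 0]

/-- The diameter of the triangle `conv{x,y,z}`. -/
def diam3 (x y z : E3) : ℝ := max ‖y - x‖ (max ‖z - x‖ ‖z - y‖)

/-- The area of the triangle `conv{x,y,z}`. -/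
def area3 (x y z : E3) : ℝ := ‖cross3 (y - x) (z - x)‖ / 2

/-- The unit normal `n̄(κ)` of the triangle `κ = conv{x,y,z}`. -/
def unitNormal (x y z : E3) : E3 :=
  ‖cross3 (y - x) (z - x)‖⁻¹ • cross3 (y - x) (z - x)

/-- The orthogonal projection of `ℝ³` onto the tangent plane `span{y−x, z−x}`
of the triangle `conv{x,y,z}`, as a map `ℝ³ → ℝ³`. -/
def tangentProj (x y z : E3) : E3 →L[ℝ] E3 :=
  (Submodule.span ℝ {y - x, z - x}).subtypeL ∘L
    Submodule.orthogonalProjection (Submodule.span ℝ {y - x, z - x})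

/-- The tangentially projected linear part `D = L∘P` of an affine map `N` with
linear part `L`, relative to the triangle `conv{x,y,z}`. -/
def tangGrad (N : E3 →ᵃ[ℝ] E3) (x y z : E3) : E3 →L[ℝ] E3 :=
  (LinearMap.toContinuousLinearMap N.linear) ∘L tangentProj x y z

lemma inner_E3_eq (a b : E3) : ⟪a, b⟫ = a 0 * b 0 + a 1 * b 1 + a 2 * b 2 := by
  simp [PiLp.inner_apply, Fin.sum_univ_three, mul_comm]

lemma norm_sq_mul_norm_cross3_sq (u v w : E3) :
    ‖w‖ ^ 2 * ‖cross3 u v‖ ^ 2 = ⟪w, cross3 u v⟫ ^ 2 + ‖⟪w, v⟫ • u - ⟪w, u⟫ • v‖ ^ 2 := by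
  simp only [← real_inner_self_eq_norm_sq, inner_E3_eq, cross3, PiLp.sub_apply, PiLp.smul_apply,
    smul_eq_mul, WithLp.equiv_symm_apply, Matrix.cons_val_zero, Matrix.cons_val_one,
    Matrix.cons_val]
  ring

lemma norm_unitNormal {x y z : E3} (h : cross3 (y - x) (z - x) ≠ 0) :
    ‖unitNormal x y z‖ = 1 := by
  rw [unitNormal, norm_smul, norm_inv, norm_norm, inv_mul_cancel₀ (norm_ne_zero_iff.mpr h)]

lemma norm_sub_sq_le_two_mul_one_sub_inner_sq {F : Type*} [NormedAddCommGroup F]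
    [InnerProductSpace ℝ F] {v w : F} (hv : ‖v‖ = 1) (hw : ‖w‖ = 1) (h : 0 ≤ ⟪v, w⟫) :
    ‖v - w‖ ^ 2 ≤ 2 * (1 - ⟪v, w⟫ ^ 2) := by
  have hle : ⟪v, w⟫ ≤ 1 := (real_inner_le_norm v w).trans (by rw [hv, hw, one_mul])
  rw [norm_sub_sq_real, hv, hw]
  nlinarith

lemma tangGrad_apply_of_mem (N : E3 →ᵃ[ℝ] E3) {x y z v : E3}
    (hv : v ∈ Submodule.span ℝ {y - x, z - x}) : tangGrad N x y z v = N.linear v := by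
  simp [tangGrad, tangentProj, Submodule.starProjection_eq_self_iff.mpr hv]

lemma apply_midpoint_sub_apply_midpoint (N : E3 →ᵃ[ℝ] E3) (x y z : E3) :
    N (midpoint ℝ y z) - N (midpoint ℝ x y) = N.linear ((2 : ℝ)⁻¹ • (z - x)) := by
  rw [← vsub_eq_sub, ← N.linearMap_vsub, midpoint_vsub_midpoint, vsub_eq_sub, vsub_eq_sub,
    midpoint_eq_smul_add, invOf_eq_inv, add_comm, sub_add_sub_cancel]

lemma norm_apply_midpoint_sub_le (N : E3 →ᵃ[ℝ] E3) (x y z : E3) :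
    ‖N (midpoint ℝ y z) - N (midpoint ℝ x y)‖ ≤ ‖tangGrad N x y z‖ * ‖z - x‖ / 2 := by
  have hmem : (2 : ℝ)⁻¹ • (z - x) ∈ Submodule.span ℝ {y - x, z - x} :=
    Submodule.smul_mem _ _ (Submodule.subset_span (by simp))
  rw [apply_midpoint_sub_apply_midpoint, ← tangGrad_apply_of_mem N hmem]
  calc ‖tangGrad N x y z ((2 : ℝ)⁻¹ • (z - x))‖
      ≤ ‖tangGrad N x y z‖ * ‖(2 : ℝ)⁻¹ • (z - x)‖ := (tangGrad N x y z).le_opNorm _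
    _ = ‖tangGrad N x y z‖ * ‖z - x‖ / 2 := by rw [norm_smul]; norm_num; ring

lemma abs_inner_apply_midpoint_le (N : E3 →ᵃ[ℝ] E3) {x y z : E3}
    (hxy : ⟪N (midpoint ℝ x y), y - x⟫ = 0) (hyz : ⟪N (midpoint ℝ y z), z - y⟫ = 0) :
    |⟪N (midpoint ℝ x y), z - x⟫| ≤ ‖tangGrad N x y z‖ * ‖z - x‖ * ‖z - y‖ / 2 := by
  set w := N (midpoint ℝ x y)
  set n := N (midpoint ℝ y z)
  have h : ⟪w, z - x⟫ = -⟪n - w, z - y⟫ := by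
    rw [show z - x = (z - y) + (y - x) by abel, inner_add_right, hxy, inner_sub_left, hyz]
    ring
  calc |⟪w, z - x⟫| ≤ ‖n - w‖ * ‖z - y‖ := by rw [h, abs_neg]; exact abs_real_inner_le_norm _ _
    _ ≤ ‖tangGrad N x y z‖ * ‖z - x‖ / 2 * ‖z - y‖ := by
        gcongr; exact norm_apply_midpoint_sub_le N x y z
    _ = ‖tangGrad N x y z‖ * ‖z - x‖ * ‖z - y‖ / 2 := by ring

lemma norm_sub_unitNormal_mul_le {x y z w : E3} (hc : cross3 (y - x) (z - x) ≠ 0)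
    (hw : ‖w‖ = 1) (hxy : ⟪w, y - x⟫ = 0) (hn : 0 ≤ ⟪w, unitNormal x y z⟫) :
    ‖w - unitNormal x y z‖ * ‖cross3 (y - x) (z - x)‖ ≤ 2 * |⟪w, z - x⟫| * ‖y - x‖ := by
  set c := cross3 (y - x) (z - x)
  set s := ⟪w, unitNormal x y z⟫
  have hcs : ⟪w, c⟫ = s * ‖c‖ := by
    simp only [s, c, unitNormal, real_inner_smul_right]
    rw [inv_mul_eq_div, div_mul_cancel₀ _ (norm_ne_zero_iff.mpr hc)]
  have hlagrange : (1 - s ^ 2) * ‖c‖ ^ 2 = ⟪w, z - x⟫ ^ 2 * ‖y - x‖ ^ 2 := by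
    have h := norm_sq_mul_norm_cross3_sq (y - x) (z - x) w
    rw [hw, hxy, zero_smul, sub_zero, norm_smul, hcs, Real.norm_eq_abs] at h
    simp only [mul_pow, sq_abs] at h
    linear_combination h
  have hsq := norm_sub_sq_le_two_mul_one_sub_inner_sq hw (norm_unitNormal hc) hn
  rw [← sq_le_sq₀ (by positivity) (by positivity)]
  calc (‖w - unitNormal x y z‖ * ‖c‖) ^ 2 ≤ 2 * (1 - s ^ 2) * ‖c‖ ^ 2 := by
        rw [mul_pow]; gcongr
    _ ≤ (2 * |⟪w, z - x⟫| * ‖y - x‖) ^ 2 := by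
        rw [mul_assoc, hlagrange, mul_pow, mul_pow, sq_abs]
        nlinarith [sq_nonneg (⟪w, z - x⟫ * ‖y - x‖)]

lemma diam3_pos_of_not_collinear {x y z : E3} (h : ¬ Collinear ℝ ({x, y, z} : Set E3)) :
    0 < diam3 x y z := by
  have hxy : y - x ≠ 0 := by
    rw [sub_ne_zero]
    rintro rfl
    exact h (by simpa using collinear_pair ℝ y z)
  exact (norm_pos_iff.mpr hxy).trans_le (le_max_left _ _)

/-- any unit edge director of a regular triangle is close to the
triangle normal, with error `C·diam(κ)·‖D‖`. -/
theorem stmt_0 (Cstar : ℝ) (hCstar : 0 < Cstar) :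
    ∃ C > (0 : ℝ), ∀ (x y z : E3) (N : E3 →ᵃ[ℝ] E3),
      ¬ Collinear ℝ ({x, y, z} : Set E3) →
      Cstar * diam3 x y z ^ 2 ≤ area3 x y z →
      ‖N (midpoint ℝ x y)‖ = 1 →
      ‖N (midpoint ℝ y z)‖ = 1 →
      ⟪N (midpoint ℝ x y), y - x⟫ = 0 →
      ⟪N (midpoint ℝ y z), z - y⟫ = 0 →
      0 ≤ ⟪N (midpoint ℝ x y), unitNormal x y z⟫ →
      ‖N (midpoint ℝ x y) - unitNormal x y z‖ ≤
        C * diam3 x y z * ‖tangGrad N x y z‖ := by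
  refine ⟨Cstar⁻¹, inv_pos.mpr hCstar, fun x y z N hcol hreg hw _ hxy hyz hn ↦ ?_⟩
  set d := diam3 x y z
  set e := ‖N (midpoint ℝ x y) - unitNormal x y z‖
  set c := cross3 (y - x) (z - x)
  have hd : 0 < d := diam3_pos_of_not_collinear hcol
  have hyx : ‖y - x‖ ≤ d := le_max_left _ _
  have hzx : ‖z - x‖ ≤ d := (le_max_left _ _).trans (le_max_right _ _)
  have hzy : ‖z - y‖ ≤ d := (le_max_right _ _).trans (le_max_right _ _)
  have hcd : Cstar * d ^ 2 ≤ ‖c‖ := by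
    have hreg' : Cstar * d ^ 2 ≤ ‖c‖ / 2 := hreg
    linarith [show 0 ≤ Cstar * d ^ 2 by positivity]
  have hc : c ≠ 0 := norm_pos_iff.mp ((by positivity : 0 < Cstar * d ^ 2).trans_le hcd)
  have he : e * (Cstar * d ^ 2) ≤ ‖tangGrad N x y z‖ * d ^ 3 :=
    calc e * (Cstar * d ^ 2) ≤ e * ‖c‖ := by gcongr
      _ ≤ 2 * (‖tangGrad N x y z‖ * ‖z - x‖ * ‖z - y‖ / 2) * ‖y - x‖ :=
          (norm_sub_unitNormal_mul_le hc hw hxy hn).trans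
            (by gcongr; exact abs_inner_apply_midpoint_le N hxy hyz)
      _ = ‖tangGrad N x y z‖ * (‖z - x‖ * ‖z - y‖ * ‖y - x‖) := by ring
      _ ≤ ‖tangGrad N x y z‖ * (d * d * d) := by gcongr
      _ = ‖tangGrad N x y z‖ * d ^ 3 := by ring
  rw [inv_mul_eq_div, div_mul_eq_mul_div, le_div_iff₀ hCstar]
  exact le_of_mul_le_mul_right (by linarith : e * Cstar * d ^ 2 ≤ d * ‖tangGrad N x y z‖ * d ^ 2)
    (pow_pos hd 2)
end
end

section
/- Let ν, ν' ∈ ℝ³ be unit vectors with ν + ν' ≠ 0, and set n₀ = (ν + ν')/|ν + ν'|. Let τ ∈ ℝ³ be a unit vector with τ·ν = τ·ν' = 0, and let n ∈ ℝ³ satisfy n·τ = 0 and n·n₀ = 1. Suppose a, b ≥ 0 are such that |n × ν| ≤ a, |n × ν'| ≤ b, and a + b ≤ 1. Then |ν − ν'| ≤ a + b and |n − ν| ≤ 4(a + b). -/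
open scoped RealInnerProductSpace

noncomputable section

/-! Write `n = n₀ + w` with `w ⊥ n₀`. As `ν - ν' ⊥ n₀`, Lagrange's identity and Cauchy–Schwarz
give `‖n × (ν - ν')‖ ≥ ‖ν - ν'‖`, and the triangle inequality for `n × ν - n × ν'` yields the first
bound. For the second, `‖n - ν‖² = ‖n × ν‖² + (1 - ⟪n, ν⟫)²`, and
`2 (1 - ⟪n, ν⟫) = (2 - ‖ν + ν'‖) - ⟪w, ν - ν'⟫` is quadratically small in `a + b`: the first term
because `‖ν + ν'‖² = 4 - ‖ν - ν'‖²`, the second because the two cross-product bounds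
control `‖w‖`. -/

open Matrix

lemma cross3_eq_crossProduct (u v : E3) :
    cross3 u v = WithLp.toLp 2 (WithLp.ofLp u ⨯₃ WithLp.ofLp v) := rfl

lemma inner_E3_eq_dotProduct (u v : E3) : ⟪u, v⟫ = WithLp.ofLp u ⬝ᵥ WithLp.ofLp v := by
  simp [EuclideanSpace.inner_eq_star_dotProduct, dotProduct_comm]

lemma norm_cross3_sq (u v : E3) : ‖cross3 u v‖ ^ 2 = ‖u‖ ^ 2 * ‖v‖ ^ 2 - ⟪u, v⟫ ^ 2 := by
  simp only [← real_inner_self_eq_norm_sq, inner_E3_eq_dotProduct, cross3_eq_crossProduct,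
    cross_dot_cross, dotProduct_comm (WithLp.ofLp v)]
  ring

lemma cross3_sub_right (u v w : E3) : cross3 u (v - w) = cross3 u v - cross3 u w := by
  simp [cross3_eq_crossProduct]

section InnerProductSpace

variable {F : Type*} [NormedAddCommGroup F] [InnerProductSpace ℝ F] {n m d v : F}

lemma ne_zero_of_inner_smul_inv_norm_eq_one (h : ⟪n, ‖v‖⁻¹ • v⟫ = 1) : v ≠ 0 := by
  rintro rfl
  simp at h

lemma inner_eq_norm_of_inner_smul_inv_norm_eq_one (h : ⟪n, ‖v‖⁻¹ • v⟫ = 1) : ⟪n, v⟫ = ‖v‖ := by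
  have hv : ‖v‖ ≠ 0 := norm_ne_zero_iff.2 (ne_zero_of_inner_smul_inv_norm_eq_one h)
  rw [real_inner_smul_right] at h
  field_simp at h
  exact h

lemma norm_sq_eq_one_add_norm_sub_sq (hm : ‖m‖ = 1) (h : ⟪n, m⟫ = 1) :
    ‖n‖ ^ 2 = 1 + ‖n - m‖ ^ 2 := by
  rw [norm_sub_sq_real, h, hm]
  ring

lemma inner_sq_le_norm_sub_sq_mul (hmd : ⟪m, d⟫ = 0) :
    ⟪n, d⟫ ^ 2 ≤ ‖n - m‖ ^ 2 * ‖d‖ ^ 2 := by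
  rw [← sub_zero ⟪n, d⟫, ← hmd, ← inner_sub_left, ← mul_pow, ← sq_abs]
  exact pow_le_pow_left₀ (abs_nonneg _) (abs_real_inner_le_norm _ _) 2

end InnerProductSpace

lemma norm_le_norm_cross3 {n m d : E3} (hm : ‖m‖ = 1) (h : ⟪n, m⟫ = 1) (hmd : ⟪m, d⟫ = 0) :
    ‖d‖ ≤ ‖cross3 n d‖ := by
  rw [← sq_le_sq₀ (norm_nonneg _) (norm_nonneg _), norm_cross3_sq,
    norm_sq_eq_one_add_norm_sub_sq hm h]
  nlinarith [inner_sq_le_norm_sub_sq_mul (n := n) hmd]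

lemma norm_sub_sq_eq_norm_cross3_sq_add {n ν : E3} (hν : ‖ν‖ = 1) :
    ‖n - ν‖ ^ 2 = ‖cross3 n ν‖ ^ 2 + (1 - ⟪n, ν⟫) ^ 2 := by
  rw [norm_sub_sq_real, norm_cross3_sq, hν]
  ring

-- `X = ⟪n, ν⟫`, `Y = ⟪n, ν'⟫`, `W = ‖n - n₀‖²`, `r = ‖ν - ν'‖`.
lemma abs_one_sub_le {X Y W r a b : ℝ} (ha : 0 ≤ a) (hb : 0 ≤ b) (hab : a + b ≤ 1)
    (hW : 0 ≤ W) (hXa : 1 + W - X ^ 2 ≤ a ^ 2) (hYb : 1 + W - Y ^ 2 ≤ b ^ 2)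
    (hS : 0 ≤ X + Y) (hSr : (X + Y) ^ 2 + r ^ 2 = 4) (hr : r ^ 2 ≤ (a + b) ^ 2)
    (hδ : (X - Y) ^ 2 ≤ W * r ^ 2) : |1 - X| ≤ a + b := by
  set c := a + b
  have hc : 0 ≤ c := add_nonneg ha hb
  have hc1 : c ^ 2 ≤ 1 := pow_le_one₀ hc hab
  have hW2 : 2 * W ≤ c ^ 2 + (X - Y) ^ 2 / 2 := by nlinarith [sq_nonneg r, mul_nonneg ha hb]
  have hδ2 : (X - Y) ^ 2 ≤ (c ^ 2) ^ 2 := by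
    nlinarith [mul_le_mul_of_nonneg_left hr hW, mul_le_mul_of_nonneg_right hW2 (sq_nonneg c),
      mul_le_mul_of_nonneg_left hc1 (sq_nonneg (X - Y))]
  obtain ⟨hδl, hδu⟩ := abs_le_of_sq_le_sq' hδ2 (sq_nonneg c)
  have hS2 : 0 ≤ 2 - (X + Y) :=
    sub_nonneg.2 (abs_le_of_sq_le_sq' (by nlinarith [sq_nonneg r]) zero_le_two).2
  have hS2' : 2 - (X + Y) ≤ c ^ 2 / 2 := by
    nlinarith [mul_le_mul_of_nonneg_left (by linarith : 2 ≤ 2 + (X + Y)) hS2]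
  have hcc : c ^ 2 ≤ c := pow_le_of_le_one hc hab two_ne_zero
  exact abs_le.2 ⟨by linarith, by linarith⟩

theorem stmt_4_general (ν ν' n : E3) (a b : ℝ)
    (hν : ‖ν‖ = 1) (hν' : ‖ν'‖ = 1)
    (hnn₀ : ⟪n, ‖ν + ν'‖⁻¹ • (ν + ν')⟫ = 1)
    (ha : 0 ≤ a) (hb : 0 ≤ b)
    (hcrossa : ‖cross3 n ν‖ ≤ a) (hcrossb : ‖cross3 n ν'‖ ≤ b)
    (hab : a + b ≤ 1) :
    ‖ν - ν'‖ ≤ a + b ∧ ‖n - ν‖ ≤ 4 * (a + b) := by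
  set n₀ := ‖ν + ν'‖⁻¹ • (ν + ν')
  have hn₀ : ‖n₀‖ = 1 := norm_smul_inv_norm (ne_zero_of_inner_smul_inv_norm_eq_one hnn₀)
  have hn₀d : ⟪n₀, ν - ν'⟫ = 0 := by
    rw [real_inner_smul_left, (real_inner_add_sub_eq_zero_iff ν ν').2 (hν.trans hν'.symm),
      mul_zero]
  have hdist : ‖ν - ν'‖ ≤ a + b := calc
    ‖ν - ν'‖ ≤ ‖cross3 n (ν - ν')‖ := norm_le_norm_cross3 hn₀ hnn₀ hn₀d
    _ ≤ ‖cross3 n ν‖ + ‖cross3 n ν'‖ := by rw [cross3_sub_right]; exact norm_sub_le _ _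
    _ ≤ a + b := add_le_add hcrossa hcrossb
  have hcross_sq {v : E3} {c : ℝ} (hv : ‖v‖ = 1) (hc : ‖cross3 n v‖ ≤ c) :
      1 + ‖n - n₀‖ ^ 2 - ⟪n, v⟫ ^ 2 ≤ c ^ 2 := by
    rw [← norm_sq_eq_one_add_norm_sub_sq hn₀ hnn₀, ← mul_one (‖n‖ ^ 2), ← one_pow 2, ← hv,
      ← norm_cross3_sq]
    exact pow_le_pow_left₀ (norm_nonneg _) hc 2
  have hsum : ⟪n, ν⟫ + ⟪n, ν'⟫ = ‖ν + ν'‖ := by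
    rw [← inner_add_right]; exact inner_eq_norm_of_inner_smul_inv_norm_eq_one hnn₀
  have h1X : |1 - ⟪n, ν⟫| ≤ a + b := by
    refine abs_one_sub_le ha hb hab (sq_nonneg _) (hcross_sq hν hcrossa) (hcross_sq hν' hcrossb)
      (hsum ▸ norm_nonneg _) ?_ (pow_le_pow_left₀ (norm_nonneg _) hdist 2) ?_
    · rw [hsum, parallelogram_law_with_norm ℝ, hν, hν']; norm_num
    · rw [← inner_sub_right]; exact inner_sq_le_norm_sub_sq_mul hn₀d
  refine ⟨hdist, ?_⟩
  rw [← sq_le_sq₀ (norm_nonneg _) (by positivity), norm_sub_sq_eq_norm_cross3_sq_add hν]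
  nlinarith [pow_le_pow_left₀ (norm_nonneg _) hcrossa 2, sq_abs (1 - ⟪n, ν⟫),
    pow_le_pow_left₀ (abs_nonneg _) h1X 2]

/-- comparison of a pseudo-unit edge director `n` with the two
triangle normals `ν, ν'` whose normalized average is `n₀`. -/
theorem stmt_4 (ν ν' τ n : E3) (a b : ℝ)
    (hν : ‖ν‖ = 1) (hν' : ‖ν'‖ = 1) (hsum : ν + ν' ≠ 0)
    (hτ : ‖τ‖ = 1) (hτν : ⟪τ, ν⟫ = 0) (hτν' : ⟪τ, ν'⟫ = 0)
    (hnτ : ⟪n, τ⟫ = 0) (hnn₀ : ⟪n, ‖ν + ν'‖⁻¹ • (ν + ν')⟫ = 1)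
    (ha : 0 ≤ a) (hb : 0 ≤ b)
    (hcrossa : ‖cross3 n ν‖ ≤ a) (hcrossb : ‖cross3 n ν'‖ ≤ b)
    (hab : a + b ≤ 1) :
    ‖ν - ν'‖ ≤ a + b ∧ ‖n - ν‖ ≤ 4 * (a + b) :=
  stmt_4_general ν ν' n a b hν hν' hnn₀ ha hb hcrossa hcrossb hab
end
end

section
/- Let ν, c ∈ ℝ³ with |ν| = 1 and c ≠ 0, and set δ := |ν·c|/|c|. If δ < 1, then there exists w ∈ ℝ³ with |w| = 1, w·c = 0, and |w − ν| ≤ √2·δ. -/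
open scoped RealInnerProductSpace

noncomputable section

/-- near any unit vector `ν` that is almost orthogonal to `c ≠ 0`
there is a unit vector `w` exactly orthogonal to `c`, at distance at most
`√2·|ν·c|/|c|`. -/
theorem stmt_8 (ν c : E3) (hν : ‖ν‖ = 1) (hc : c ≠ 0)
    (hδ : |⟪ν, c⟫| / ‖c‖ < 1) :
    ∃ w : E3, ‖w‖ = 1 ∧ ⟪w, c⟫ = 0 ∧
      ‖w - ν‖ ≤ Real.sqrt 2 * (|⟪ν, c⟫| / ‖c‖) := by
  set s : ℝ := ⟪ν, c⟫ with hs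
  have hcn : (0:ℝ) < ‖c‖ := norm_pos_iff.mpr hc
  set δ : ℝ := |s| / ‖c‖ with hδdef
  have hδ0 : 0 ≤ δ := div_nonneg (abs_nonneg s) hcn.le
  set p : E3 := ν - (s / ‖c‖ ^ 2) • c with hp
  have hpc : ⟪p, c⟫ = 0 := by
    rw [hp, inner_sub_left, real_inner_smul_left, real_inner_self_eq_norm_sq,
      ← hs, div_mul_cancel₀ _ (by positivity : (‖c‖:ℝ) ^ 2 ≠ 0), sub_self]
  have hpsq : ‖p‖ ^ 2 = 1 - δ ^ 2 := by
    have h1 := norm_sub_sq_real ν ((s / ‖c‖ ^ 2) • c)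
    rw [← hp] at h1
    rw [h1, real_inner_smul_right, norm_smul, hν]
    rw [hδdef, div_pow, sq_abs, Real.norm_eq_abs, mul_pow, sq_abs, div_pow, ← hs]
    field_simp
    ring
  have hδ2 : δ ^ 2 ≤ 1 := by nlinarith [sq_nonneg ‖p‖]
  have hppos : 0 < ‖p‖ := by nlinarith [norm_nonneg p]
  have hpν : ⟪p, ν⟫ = ‖p‖ ^ 2 := by
    have : ⟪p, ν - p⟫ = 0 := by
      have hνp : ν - p = (s / ‖c‖ ^ 2) • c := by rw [hp]; abel
      rw [hνp, real_inner_smul_right, hpc, mul_zero]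
    have h2 : ⟪p, ν⟫ = ⟪p, p⟫ + ⟪p, ν - p⟫ := by
      rw [← inner_add_right]; congr 1; abel
    rw [h2, this, add_zero, real_inner_self_eq_norm_sq]
  refine ⟨‖p‖⁻¹ • p, ?_, ?_, ?_⟩
  · rw [norm_smul, Real.norm_eq_abs, abs_inv, abs_of_pos hppos,
      inv_mul_cancel₀ hppos.ne']
  · rw [real_inner_smul_left, hpc, mul_zero]
  · have hwsq : ‖‖p‖⁻¹ • p - ν‖ ^ 2 = 2 - 2 * ‖p‖ := by
      rw [norm_sub_sq_real, real_inner_smul_left, hpν, norm_smul,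
        Real.norm_eq_abs, abs_inv, abs_of_pos hppos, hν]
      field_simp
      ring
    have hple : ‖p‖ ≤ 1 := by nlinarith [norm_nonneg p]
    have hkey : 1 - δ ^ 2 ≤ ‖p‖ := by nlinarith
    have h2 : ‖‖p‖⁻¹ • p - ν‖ ^ 2 ≤ (Real.sqrt 2 * δ) ^ 2 := by
      rw [hwsq, mul_pow, Real.sq_sqrt (by norm_num : (2:ℝ) ≥ 0)]
      nlinarith
    calc ‖‖p‖⁻¹ • p - ν‖ = Real.sqrt (‖‖p‖⁻¹ • p - ν‖ ^ 2) :=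
          (Real.sqrt_sq (norm_nonneg _)).symm
      _ ≤ Real.sqrt ((Real.sqrt 2 * δ) ^ 2) := Real.sqrt_le_sqrt h2
      _ = Real.sqrt 2 * δ := Real.sqrt_sq (by positivity)
end
end
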